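/- arXiv:1912.12415 — 6 statements merged into one kernel-verified Lean document; each statement's English description precedes it below -/
import Mathlib

section
/- Let G be a group and let α be a tensor commuting automorphism of G. Then for all x, y ∈ G, one has x ⊗ α(y) = (y ⊗ α(x))⁻¹ in the non-abelian tensor square G ⊗ G. -/
/-!
Non-abelian tensor square `G ⊗ G`, constructed as the presented group on
symbols `g ⊗ h` with the defining relations
`g*g' ⊗ h = (g^{g'} ⊗ h^{g'}) * (g' ⊗ h)` and
`g ⊗ h*h' = (g ⊗ h') * (g^{h'} ⊗ h^{h'})`, where `a ^ b = b⁻¹ * a * b`.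
-/

variable {G : Type*} [Group G]

/-- Defining relations of the non-abelian tensor square `G ⊗ G`. -/
def tensorRels (G : Type*) [Group G] : Set (FreeGroup (G × G)) :=
  {r | (∃ g g' h : G,
      r = FreeGroup.of (g * g', h) *
        (FreeGroup.of (g'⁻¹ * g * g', g'⁻¹ * h * g') * FreeGroup.of (g', h))⁻¹) ∨
    (∃ g h h' : G,
      r = FreeGroup.of (g, h * h') *
        (FreeGroup.of (g, h') * FreeGroup.of (h'⁻¹ * g * h', h'⁻¹ * h * h'))⁻¹)}

/-- The non-abelian tensor square `G ⊗ G`. -/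
abbrev TensorSquare (G : Type*) [Group G] := PresentedGroup (tensorRels G)

/-- The tensor `g ⊗ h` as an element of `G ⊗ G`. -/
def tmul (g h : G) : TensorSquare G := PresentedGroup.of (g, h)

theorem tensorRels_eq_one {r : FreeGroup (G × G)} (hr : r ∈ tensorRels G) :
    PresentedGroup.mk (tensorRels G) r = 1 :=
  (QuotientGroup.eq_one_iff r).mpr (Subgroup.subset_normalClosure hr)

/-- The first defining relation of `G ⊗ G`. -/
theorem tmul_rel₁ (g g' h : G) :
    tmul (g * g') h = tmul (g'⁻¹ * g * g') (g'⁻¹ * h * g') * tmul g' h := by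
  have h1 := tensorRels_eq_one (G := G) (Or.inl ⟨g, g', h, rfl⟩)
  rw [map_mul, map_inv, map_mul, mul_inv_eq_one] at h1
  exact h1

/-- The second defining relation of `G ⊗ G`. -/
theorem tmul_rel₂ (g h h' : G) :
    tmul g (h * h') = tmul g h' * tmul (h'⁻¹ * g * h') (h'⁻¹ * h * h') := by
  have h1 := tensorRels_eq_one (G := G) (Or.inr ⟨g, h, h', rfl⟩)
  rw [map_mul, map_inv, map_mul, mul_inv_eq_one] at h1
  exact h1

/-- The action of `x : G` on `G ⊗ G`, determined by `(g ⊗ h) ^ x = (x⁻¹*g*x) ⊗ (x⁻¹*h*x)`. -/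
def tensorAct (x : G) : TensorSquare G →* TensorSquare G :=
  PresentedGroup.toGroup
    (f := fun p : G × G => tmul (x⁻¹ * p.1 * x) (x⁻¹ * p.2 * x))
    (by
      rintro r (⟨g, g', h, rfl⟩ | ⟨g, h, h', rfl⟩) <;>
        simp only [map_mul, map_inv, FreeGroup.lift_apply_of, mul_inv_eq_one]
      · have := tmul_rel₁ (x⁻¹ * g * x) (x⁻¹ * g' * x) (x⁻¹ * h * x)
        convert this using 2 <;> group
      · have := tmul_rel₂ (x⁻¹ * g * x) (x⁻¹ * h * x) (x⁻¹ * h' * x)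
        convert this using 2 <;> group)

@[simp] theorem tensorAct_tmul (x g h : G) :
    tensorAct x (tmul g h) = tmul (x⁻¹ * g * x) (x⁻¹ * h * x) :=
  PresentedGroup.toGroup.of _

/-- An automorphism `α` of `G` is tensor commuting if `g ⊗ α g = 1` for all `g`. -/
def IsTensorCommuting (α : G ≃* G) : Prop := ∀ g : G, tmul g (α g) = 1

/-- An automorphism `α` of `G` is tensor central if `[x, α] = x⁻¹ * α x` lies in the
tensor center of `G`, i.e. `(x⁻¹ * α x) ⊗ y = 1` for all `x y`. -/
def IsTensorCentral (α : G ≃* G) : Prop := ∀ x y : G, tmul (x⁻¹ * α x) y = 1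

/-- The inner automorphism `T_g : x ↦ x ^ g = g⁻¹ * x * g` of `G` induced by `g`. -/
def innerAut (g : G) : G ≃* G := MulAut.conj g⁻¹

def tensorCommutator (G : Type*) [Group G] : TensorSquare G →* G :=
  PresentedGroup.toGroup (f := fun p : G × G => p.1⁻¹ * p.2⁻¹ * p.1 * p.2)
    (by
      rintro r (⟨g, g', h, rfl⟩ | ⟨g, h, h', rfl⟩) <;>
        simp only [map_mul, map_inv, FreeGroup.lift_apply_of] <;> group)

@[simp] theorem tensorCommutator_tmul (g h : G) :
    tensorCommutator G (tmul g h) = g⁻¹ * h⁻¹ * g * h :=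
  PresentedGroup.toGroup.of _

theorem commute_of_tmul_eq_one {g h : G} (hgh : tmul g h = 1) : Commute g h := by
  have hκ := congrArg (tensorCommutator G) hgh
  rw [tensorCommutator_tmul, map_one] at hκ
  calc g * h = h * g * (g⁻¹ * h⁻¹ * g * h) := by group
    _ = h * g := by rw [hκ, mul_one]

theorem tmul_conj_eq_one {g h : G} (hgh : tmul g h = 1) (z : G) :
    tmul (z⁻¹ * g * z) (z⁻¹ * h * z) = 1 := by
  rw [← tensorAct_tmul, hgh, map_one]

/-- The vanishing of `y ⊗ c` makes `y` and `c` commute, which collapses both defining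
relations. -/
theorem tmul_mul_mul_of_tmul_eq_one {x y a c : G} (hxa : tmul x a = 1) (hyc : tmul y c = 1) :
    tmul (x * y) (a * c) = tmul (y⁻¹ * x * y) c * tmul y (c⁻¹ * a * c) := by
  have hcomm : y * c = c * y := commute_of_tmul_eq_one hyc
  have hc : y⁻¹ * c * y = c := by rw [mul_assoc, ← hcomm, inv_mul_cancel_left]
  have hxy : c⁻¹ * (x * y) * c = (c⁻¹ * x * c) * y := by
    calc c⁻¹ * (x * y) * c = c⁻¹ * x * (y * c) := by group
      _ = (c⁻¹ * x * c) * y := by rw [hcomm]; group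
  have hconj : tmul (y⁻¹ * (c⁻¹ * x * c) * y) (y⁻¹ * (c⁻¹ * a * c) * y) = 1 := by
    simpa only [mul_inv_rev, mul_assoc] using tmul_conj_eq_one hxa (c * y)
  rw [tmul_rel₂ (x * y) a c, tmul_rel₁ x y c, hc, hyc, mul_one, hxy,
    tmul_rel₁ (c⁻¹ * x * c) y (c⁻¹ * a * c), hconj, one_mul]

/-- If `α` is a tensor commuting automorphism of `G`, then
`x ⊗ α y = (y ⊗ α x)⁻¹` for all `x y ∈ G`. -/
theorem stmt_0 (G : Type*) [Group G] (α : G ≃* G) (hα : IsTensorCommuting α)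
    (x y : G) : tmul x (α y) = (tmul y (α x))⁻¹ := by
  have h := tmul_mul_mul_of_tmul_eq_one (hα (y * x * y⁻¹)) (hα y)
  rw [← map_mul, hα, map_mul, map_mul, map_inv] at h
  simp only [mul_assoc, inv_mul_cancel_left, inv_mul_cancel, mul_one] at h
  exact eq_inv_of_mul_eq_one_left h.symm
end

section
/- Let G be a group and let α be a tensor commuting automorphism of G. Then for all x, y ∈ G, one has α(x) ⊗ y = (α(y) ⊗ x)⁻¹ in the non-abelian tensor square G ⊗ G. -/
/-!
Non-abelian tensor square `G ⊗ G`, constructed as the presented group on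
symbols `g ⊗ h` with the defining relations
`g*g' ⊗ h = (g^{g'} ⊗ h^{g'}) * (g' ⊗ h)` and
`g ⊗ h*h' = (g ⊗ h') * (g^{h'} ⊗ h^{h'})`, where `a ^ b = b⁻¹ * a * b`.
-/

variable {G : Type*} [Group G]

/-!
Since `g ⊗ h ↦ g⁻¹h⁻¹gh` is a homomorphism, `y ⊗ α y = 1` forces `y` and `α y` to commute.
Expanding `1 = zy ⊗ α(zy) = zy ⊗ α z α y` with the defining relations, this lets the
conjugations cancel and leaves `(x ⊗ α y)(y ⊗ α x) = 1`, where `x = z ^ y`. The anti-automorphism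
`g ⊗ h ↦ (h ⊗ g)⁻¹` of `G ⊗ G` turns this into the claim.
-/

def tensorCommutatorHom : TensorSquare G →* G :=
  PresentedGroup.toGroup
    (f := fun p : G × G => p.1⁻¹ * p.2⁻¹ * p.1 * p.2)
    (by
      rintro r (⟨g, g', h, rfl⟩ | ⟨g, h, h', rfl⟩) <;>
        simp only [map_mul, map_inv, FreeGroup.lift_apply_of, mul_inv_eq_one] <;> group)

@[simp] theorem tensorCommutatorHom_tmul (g h : G) :
    tensorCommutatorHom (tmul g h) = g⁻¹ * h⁻¹ * g * h :=
  PresentedGroup.toGroup.of _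

def tensorSwap : TensorSquare G →* TensorSquare G :=
  PresentedGroup.toGroup
    (f := fun p : G × G => (tmul p.2 p.1)⁻¹)
    (by
      rintro r (⟨g, g', h, rfl⟩ | ⟨g, h, h', rfl⟩) <;>
        simp only [map_mul, map_inv, FreeGroup.lift_apply_of, mul_inv_eq_one]
      · rw [tmul_rel₂ h g g']; group
      · rw [tmul_rel₁ h h' g]; group)

@[simp] theorem tensorSwap_tmul (g h : G) : tensorSwap (tmul g h) = (tmul h g)⁻¹ :=
  PresentedGroup.toGroup.of _

theorem tmul_mul_mul_of_commute {y k : G} (hyk : Commute y k) (hyk_tmul : tmul y k = 1) (z h : G) :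
    tmul (z * y) (h * k) =
      tmul (y⁻¹ * z * y) k * tensorAct (k * y) (tmul z h) * tmul y (k⁻¹ * h * k) := by
  have hconj : k⁻¹ * (z * y) * k = (k⁻¹ * z * k) * y := by
    rw [mul_assoc, mul_assoc z, hyk.eq]; group
  have hact : tensorAct (k * y) (tmul z h) =
      tmul (y⁻¹ * (k⁻¹ * z * k) * y) (y⁻¹ * (k⁻¹ * h * k) * y) := by
    rw [tensorAct_tmul]; congr 1 <;> group
  have hfix : y⁻¹ * k * y = k := by rw [mul_assoc, ← hyk.eq]; group
  rw [tmul_rel₂ (z * y) h k, tmul_rel₁ z y k, hfix, hyk_tmul, mul_one, hconj,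
    tmul_rel₁ (k⁻¹ * z * k) y (k⁻¹ * h * k), ← hact, ← mul_assoc]

theorem IsTensorCommuting.tmul_mul_tmul_eq_one {α : G ≃* G} (hα : IsTensorCommuting α) (x y : G) :
    tmul x (α y) * tmul y (α x) = 1 := by
  have hexp := tmul_mul_mul_of_commute (commute_of_tmul_eq_one (hα y)) (hα y)
    (y * x * y⁻¹) (α (y * x * y⁻¹))
  rw [← map_mul, hα, hα, map_one, mul_one, ← map_inv, ← map_mul, ← map_mul,
    show y⁻¹ * (y * x * y⁻¹) * y = x by group] at hexp
  exact hexp.symm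

/-- If `α` is a tensor commuting automorphism of `G`, then
`α x ⊗ y = (α y ⊗ x)⁻¹` for all `x y ∈ G`. -/
theorem stmt_1 (G : Type*) [Group G] (α : G ≃* G) (hα : IsTensorCommuting α)
    (x y : G) : tmul (α x) y = (tmul (α y) x)⁻¹ := by
  have h := congrArg tensorSwap (eq_inv_of_mul_eq_one_right (hα.tmul_mul_tmul_eq_one y x))
  rw [tensorSwap_tmul, map_inv, tensorSwap_tmul, inv_inv] at h
  exact h.symm
end

section
/- Let G be a group such that x ⊗ x = 1_⊗ for all x ∈ G. If α is a tensor commuting automorphism of G, then αⁿ is a tensor commuting automorphism of G for every integer n ≥ 0; that is, A^⊗(G) is closed under taking nonnegative powers. -/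
/-!
Non-abelian tensor square `G ⊗ G`, constructed as the presented group on
symbols `g ⊗ h` with the defining relations
`g*g' ⊗ h = (g^{g'} ⊗ h^{g'}) * (g' ⊗ h)` and
`g ⊗ h*h' = (g ⊗ h') * (g^{h'} ⊗ h^{h'})`, where `a ^ b = b⁻¹ * a * b`.
-/

variable {G : Type*} [Group G]

/-
Expanding `1 = (x * y) ⊗ α (x * y)` with both defining relations and discarding the factors
`x ⊗ α x` and `y ⊗ α y` gives `(x ⊗ α y) ^ y * (y ⊗ α x) ^ (α y) = 1`. For `α = id` and
`x ⊗ x = 1` this makes `⊗` antisymmetric. For a general `α`, taking `x = g` and `y = α ^ (n + 1) g`,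
the second factor is `α ^ (n + 1) g ⊗ α g`, which is trivial by antisymmetry once `α ^ n` is
tensor commuting; hence `g ⊗ α ^ (n + 2) g = 1`, and the powers are handled by two-step induction.
-/

theorem tmul_mul_left (g g' h : G) :
    tmul (g * g') h = tensorAct g' (tmul g h) * tmul g' h := by
  rw [tmul_rel₁, tensorAct_tmul]

theorem tmul_mul_right (g h h' : G) :
    tmul g (h * h') = tmul g h' * tensorAct h' (tmul g h) := by
  rw [tmul_rel₂, tensorAct_tmul]

theorem tensorAct_tensorAct (a b : G) (u : TensorSquare G) :
    tensorAct b (tensorAct a u) = tensorAct (a * b) u := by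
  suffices (tensorAct b).comp (tensorAct a) = tensorAct (a * b) from DFunLike.congr_fun this u
  refine PresentedGroup.ext fun ⟨g, h⟩ => ?_
  change tensorAct b (tensorAct a (tmul g h)) = tensorAct (a * b) (tmul g h)
  simp only [tensorAct_tmul, mul_inv_rev, mul_assoc]

theorem tensorAct_one_apply (u : TensorSquare G) : tensorAct (1 : G) u = u := by
  suffices tensorAct (1 : G) = MonoidHom.id (TensorSquare G) from DFunLike.congr_fun this u
  refine PresentedGroup.ext fun ⟨g, h⟩ => ?_
  change tensorAct (1 : G) (tmul g h) = tmul g h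
  simp only [tensorAct_tmul, inv_one, one_mul, mul_one]

theorem tensorAct_eq_one_iff {a : G} {u : TensorSquare G} : tensorAct a u = 1 ↔ u = 1 := by
  refine ⟨fun h => ?_, fun h => by rw [h, map_one]⟩
  simpa only [tensorAct_tensorAct, mul_inv_cancel, tensorAct_one_apply, map_one]
    using congrArg (tensorAct a⁻¹) h

theorem IsTensorCommuting.tensorAct_mul_tensorAct_eq_one {α : G ≃* G}
    (hα : IsTensorCommuting α) (x y : G) :
    tensorAct y (tmul x (α y)) * tensorAct (α y) (tmul y (α x)) = 1 := by
  have h := hα (x * y)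
  rwa [map_mul, tmul_mul_right, tmul_mul_left, tmul_mul_left, hα x, hα y,
    map_one, one_mul, mul_one] at h

theorem tmul_mul_tmul_swap (hsq : ∀ x : G, tmul x x = 1) (a b : G) :
    tmul a b * tmul b a = 1 := by
  have h := IsTensorCommuting.tensorAct_mul_tensorAct_eq_one (α := MulEquiv.refl G) hsq a b
  rwa [MulEquiv.refl_apply, MulEquiv.refl_apply, ← map_mul, tensorAct_eq_one_iff] at h

theorem tmul_swap_eq_one (hsq : ∀ x : G, tmul x x = 1) {a b : G} (h : tmul a b = 1) :
    tmul b a = 1 := by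
  simpa only [h, one_mul] using tmul_mul_tmul_swap hsq a b

theorem IsTensorCommuting.mul_mul (hsq : ∀ x : G, tmul x x = 1) {α β : G ≃* G}
    (hα : IsTensorCommuting α) (hβ : IsTensorCommuting β) (hαβ : Commute α β) :
    IsTensorCommuting (α * (α * β)) := by
  intro g
  have hswap : tmul (α (β g)) (α g) = 1 := by
    refine tmul_swap_eq_one hsq ?_
    simpa only [← MulAut.mul_apply, hαβ.eq] using hβ (α g)
  have h := hα.tensorAct_mul_tensorAct_eq_one g (α (β g))
  rwa [hswap, map_one, mul_one, tensorAct_eq_one_iff] at h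

/-- If `x ⊗ x = 1` for all `x ∈ G` and `α` is a tensor commuting automorphism,
then `α ^ n` is a tensor commuting automorphism for every `n ≥ 0`. -/
theorem stmt_2 (G : Type*) [Group G] (hsq : ∀ x : G, tmul x x = 1)
    (α : G ≃* G) (hα : IsTensorCommuting α) (n : ℕ) :
    IsTensorCommuting (α ^ n) := by
  induction n using Nat.twoStepInduction with
  | zero => exact hsq
  | one => rwa [pow_one]
  | more n hn _ =>
    rw [pow_succ', pow_succ']
    exact hα.mul_mul hsq hn (Commute.self_pow α n)
end

section
/- Let G be a group. If α is a tensor commuting automorphism of G, then the inverse automorphism α⁻¹ is also a tensor commuting automorphism of G; that is, A^⊗(G) is closed under inverses. -/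
/-!
Non-abelian tensor square `G ⊗ G`, constructed as the presented group on
symbols `g ⊗ h` with the defining relations
`g*g' ⊗ h = (g^{g'} ⊗ h^{g'}) * (g' ⊗ h)` and
`g ⊗ h*h' = (g ⊗ h') * (g^{h'} ⊗ h^{h'})`, where `a ^ b = b⁻¹ * a * b`.
-/

variable {G : Type*} [Group G]

-- Well defined because the flip exchanges the two families of defining relations.
def tensorFlip : TensorSquare G →* TensorSquare G :=
  PresentedGroup.toGroup
    (f := fun p : G × G => (tmul p.2 p.1)⁻¹)
    (by
      rintro r (⟨g, g', h, rfl⟩ | ⟨g, h, h', rfl⟩) <;>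
        simp only [map_mul, map_inv, FreeGroup.lift_apply_of, mul_inv_rev, inv_inv,
          inv_mul_eq_one]
      · exact tmul_rel₂ h g g'
      · exact tmul_rel₁ h h' g)

@[simp] theorem tensorFlip_tmul (g h : G) : tensorFlip (tmul g h) = (tmul h g)⁻¹ :=
  PresentedGroup.toGroup.of _

theorem tmul_eq_one_symm {g h : G} (hgh : tmul g h = 1) : tmul h g = 1 := by
  simpa using congrArg tensorFlip hgh

/-- If `α` is a tensor commuting automorphism of `G`, so is `α⁻¹`. -/
theorem stmt_4 (G : Type*) [Group G] (α : G ≃* G) (hα : IsTensorCommuting α) :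
    IsTensorCommuting α⁻¹ := fun g =>
  tmul_eq_one_symm (by simpa using hα (α⁻¹ g))
end

section
/- Let G be a group, let α be a tensor commuting automorphism of G, and let x ∈ G. Then the element [x, α] = x⁻¹α(x) of G acts trivially on the non-abelian tensor square G ⊗ G; that is, (z ⊗ w)^{[x,α]} = z ⊗ w for all z, w ∈ G. -/
/-!
Non-abelian tensor square `G ⊗ G`, constructed as the presented group on
symbols `g ⊗ h` with the defining relations
`g*g' ⊗ h = (g^{g'} ⊗ h^{g'}) * (g' ⊗ h)` and
`g ⊗ h*h' = (g ⊗ h') * (g^{h'} ⊗ h^{h'})`, where `a ^ b = b⁻¹ * a * b`.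
-/

variable {G : Type*} [Group G]

/-!
Expanding `uv ⊗ α(uv) = 1` with both defining relations gives
`(u ⊗ αv)^v = ((v ⊗ αu)^{αv})⁻¹`; applying this once more to `(uv, w)` and cancelling
yields `(u ⊗ αw)^{vw} = (u ⊗ αw)^{w (αw)⁻¹ (αv) (αw)}` for all `v`. Taking `v = w⁻¹` shows
that `w (αw)⁻¹` fixes `u ⊗ αw`, hence `x` and `αx` act alike on every generator `u ⊗ αw`,
which is the claim since `α` is surjective.
-/

theorem tensorAct_mul (a b : G) (t : TensorSquare G) :
    tensorAct (a * b) t = tensorAct b (tensorAct a t) := by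
  suffices h : tensorAct (a * b) = (tensorAct b).comp (tensorAct a) from
    DFunLike.congr_fun h t
  refine PresentedGroup.ext fun p => ?_
  change tensorAct (a * b) (tmul p.1 p.2) = tensorAct b (tensorAct a (tmul p.1 p.2))
  simp only [tensorAct_tmul]
  congr 1 <;> group

theorem tensorAct_one (t : TensorSquare G) : tensorAct (1 : G) t = t := by
  suffices h : tensorAct (1 : G) = MonoidHom.id (TensorSquare G) from
    DFunLike.congr_fun h t
  refine PresentedGroup.ext fun p => ?_
  change tensorAct (1 : G) (tmul p.1 p.2) = tmul p.1 p.2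
  simp

namespace IsTensorCommuting

variable {α : G ≃* G}

theorem tensorAct_tmul_swap (hα : IsTensorCommuting α) (u v : G) :
    tensorAct (α v) (tmul v (α u)) = (tensorAct v (tmul u (α v)))⁻¹ := by
  have h := hα (u * v)
  rw [map_mul, tmul_mul_right, tmul_mul_left u v (α v), tmul_mul_left u v (α u), hα u, hα v,
    map_one, mul_one, one_mul] at h
  exact eq_inv_of_mul_eq_one_right h

theorem tensorAct_tmul_swap_mul (hα : IsTensorCommuting α) (u v w : G) :
    tensorAct (α v * α w) (tmul w (α u)) = (tensorAct (v * w) (tmul u (α w)))⁻¹ := by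
  have h := hα.tensorAct_tmul_swap (u * v) w
  rw [map_mul, tmul_mul_right, map_mul, ← tensorAct_mul, tmul_mul_left, map_mul,
    ← tensorAct_mul, mul_inv_rev, hα.tensorAct_tmul_swap v w] at h
  exact mul_left_cancel h

theorem tensorAct_tmul_mul_eq (hα : IsTensorCommuting α) (u v w : G) :
    tensorAct (v * w) (tmul u (α w)) =
      tensorAct (w * (α w)⁻¹ * (α v * α w)) (tmul u (α w)) := by
  refine inv_injective ?_
  calc (tensorAct (v * w) (tmul u (α w)))⁻¹
      = tensorAct (α v * α w) (tmul w (α u)) := (hα.tensorAct_tmul_swap_mul u v w).symm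
    _ = tensorAct ((α w)⁻¹ * (α v * α w)) (tensorAct (α w) (tmul w (α u))) := by
        rw [← tensorAct_mul, mul_inv_cancel_left]
    _ = (tensorAct (w * (α w)⁻¹ * (α v * α w)) (tmul u (α w)))⁻¹ := by
        rw [hα.tensorAct_tmul_swap, map_inv, ← tensorAct_mul, mul_assoc]

theorem tensorAct_map_tmul (hα : IsTensorCommuting α) (x u w : G) :
    tensorAct (α x) (tmul u (α w)) = tensorAct x (tmul u (α w)) := by
  have fixed : tensorAct (w * (α w)⁻¹) (tmul u (α w)) = tmul u (α w) := by
    have h := hα.tensorAct_tmul_mul_eq u w⁻¹ w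
    rw [inv_mul_cancel, tensorAct_one, map_inv, inv_mul_cancel, mul_one] at h
    exact h.symm
  have h := hα.tensorAct_tmul_mul_eq u (x * w⁻¹) w
  rw [inv_mul_cancel_right, map_mul, map_inv, inv_mul_cancel_right, tensorAct_mul,
    fixed] at h
  exact h.symm

end IsTensorCommuting

/-- If `α` is a tensor commuting automorphism of `G` and `x ∈ G`, then
`[x, α] = x⁻¹ * α x` acts trivially on `G ⊗ G`. -/
theorem stmt_7 (G : Type*) [Group G] (α : G ≃* G) (hα : IsTensorCommuting α)
    (x z w : G) : tensorAct (x⁻¹ * α x) (tmul z w) = tmul z w := by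
  obtain ⟨w, rfl⟩ := α.surjective w
  rw [tensorAct_mul, ← hα.tensorAct_map_tmul, ← tensorAct_mul, map_inv, inv_mul_cancel,
    tensorAct_one]
end

section
/- Let G be a group and let α be a tensor central automorphism of G. Then α(x) ⊗ α(y) = x ⊗ y for all x, y ∈ G; that is, the induced endomorphism α ⊗ α of G ⊗ G is the identity. -/
/-!
Non-abelian tensor square `G ⊗ G`, constructed as the presented group on
symbols `g ⊗ h` with the defining relations
`g*g' ⊗ h = (g^{g'} ⊗ h^{g'}) * (g' ⊗ h)` and
`g ⊗ h*h' = (g ⊗ h') * (g^{h'} ⊗ h^{h'})`, where `a ^ b = b⁻¹ * a * b`.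
-/

variable {G : Type*} [Group G]

/-
Write `α x = x * c` with `c = x⁻¹ * α x` in the tensor center. By the defining relations,
multiplying either slot of `g ⊗ h` on the right by an element of the tensor center does not change
it; for the right slot one needs that tensor-central elements also annihilate from the left, which
follows from the endomorphism `g ⊗ h ↦ (h ⊗ g)⁻¹` of `G ⊗ G`.
-/

def tensorCenter (G : Type*) [Group G] : Set G := {a | ∀ y : G, tmul a y = 1}

def tensorSwapInv : TensorSquare G →* TensorSquare G :=
  PresentedGroup.toGroup (f := fun p : G × G => (tmul p.2 p.1)⁻¹) (by
    rintro r (⟨g, g', h, rfl⟩ | ⟨g, h, h', rfl⟩) <;>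
      simp only [map_mul, map_inv, FreeGroup.lift_apply_of, mul_inv_rev, inv_inv]
    · rw [← tmul_rel₂, inv_mul_cancel]
    · rw [← tmul_rel₁, inv_mul_cancel])

theorem tensorSwapInv_tmul (g h : G) : tensorSwapInv (tmul g h) = (tmul h g)⁻¹ :=
  PresentedGroup.toGroup.of _

theorem tmul_eq_one_of_mem_tensorCenter {c : G} (hc : c ∈ tensorCenter G) (y : G) :
    tmul y c = 1 := by
  simpa [tensorSwapInv_tmul] using congrArg tensorSwapInv (hc y)

theorem tmul_mul_left_of_mem_tensorCenter {c : G} (hc : c ∈ tensorCenter G) (g h : G) :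
    tmul (g * c) h = tmul g h := by
  have := tmul_rel₁ (g * c * g⁻¹) g h
  rwa [inv_mul_cancel_right, show g⁻¹ * (g * c * g⁻¹) * g = c by group, hc, one_mul] at this

theorem tmul_mul_right_of_mem_tensorCenter {c : G} (hc : c ∈ tensorCenter G) (g h : G) :
    tmul g (h * c) = tmul g h := by
  have := tmul_rel₂ g (h * c * h⁻¹) h
  rwa [inv_mul_cancel_right, show h⁻¹ * (h * c * h⁻¹) * h = c by group,
    tmul_eq_one_of_mem_tensorCenter hc, mul_one] at this

/-- If `α` is a tensor central automorphism of `G`, then `α x ⊗ α y = x ⊗ y` for all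
`x y ∈ G`; that is, `α ⊗ α` is the identity on `G ⊗ G`. -/
theorem stmt_14 (G : Type*) [Group G] (α : G ≃* G) (hα : IsTensorCentral α)
    (x y : G) : tmul (α x) (α y) = tmul x y := by
  have hx : α x = x * (x⁻¹ * α x) := (mul_inv_cancel_left x (α x)).symm
  have hy : α y = y * (y⁻¹ * α y) := (mul_inv_cancel_left y (α y)).symm
  rw [hx, hy, tmul_mul_left_of_mem_tensorCenter (hα x),
    tmul_mul_right_of_mem_tensorCenter (hα y)]
end
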